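/- Let a₁, a₂, a₃, a₄ > 0 and define the stencil C₋₁,₁ := −a₁²(a₂+a₃)/(a₂²(a₁+a₄)), C₀,₁ := −2(a₁+a₂)/a₂, C₁,₁ := −1, C₋₁,₀ := −2a₁(a₂+a₃)/a₂², C₀,₀ := 5(a₂+a₃)(a₁+a₂)/a₂², C₁,₀ := −2(a₂+a₃)/a₂, C₋₁,−1 := −a₁a₄(a₂+a₃)/(a₂²(a₁+a₄)), C₀,−1 := −2a₃(a₁+a₂)/a₂², C₁,−1 := −a₃/a₂. Then C₀,₀ > 0, C_{k,ℓ} < 0 for all (k,ℓ) ≠ (0,0), and ∑_{k=−1}^{1} ∑_{ℓ=−1}^{1} C_{k,ℓ} = 0; in particular these coefficients satisfy the sign condition and the summation condition for all positive a₁, a₂, a₃, a₄. -/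
import Mathlib


open Finset

/-- the 9-point stencil coefficients at the interface intersection grid point. -/
noncomputable def Ccross (a₁ a₂ a₃ a₄ : ℝ) : ℤ → ℤ → ℝ := fun k l =>
  if k = -1 ∧ l = 1 then -a₁^2*(a₂+a₃) / (a₂^2*(a₁+a₄))
  else if k = 0 ∧ l = 1 then -2*(a₁+a₂)/a₂
  else if k = 1 ∧ l = 1 then -1
  else if k = -1 ∧ l = 0 then -2*a₁*(a₂+a₃)/a₂^2
  else if k = 0 ∧ l = 0 then 5*(a₂+a₃)*(a₁+a₂)/a₂^2
  else if k = 1 ∧ l = 0 then -2*(a₂+a₃)/a₂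
  else if k = -1 ∧ l = -1 then -a₁*a₄*(a₂+a₃) / (a₂^2*(a₁+a₄))
  else if k = 0 ∧ l = -1 then -2*a₃*(a₁+a₂)/a₂^2
  else -a₃/a₂

theorem stmt10 (a₁ a₂ a₃ a₄ : ℝ) (ha₁ : 0 < a₁) (ha₂ : 0 < a₂) (ha₃ : 0 < a₃) (ha₄ : 0 < a₄) :
    0 < Ccross a₁ a₂ a₃ a₄ 0 0 ∧
    (∀ k ∈ Finset.Icc (-1 : ℤ) 1, ∀ l ∈ Finset.Icc (-1 : ℤ) 1,
      (k, l) ≠ (0, 0) → Ccross a₁ a₂ a₃ a₄ k l < 0) ∧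
    (∑ k ∈ Finset.Icc (-1 : ℤ) 1, ∑ l ∈ Finset.Icc (-1 : ℤ) 1, Ccross a₁ a₂ a₃ a₄ k l) = 0 := by
  have hIcc : Finset.Icc (-1 : ℤ) 1 = {-1, 0, 1} := rfl
  refine ⟨?_, ?_, ?_⟩
  · simp only [Ccross]
    norm_num
    positivity
  · intro k hk l hl hne
    rw [hIcc] at hk hl
    simp only [Finset.mem_insert, Finset.mem_singleton] at hk hl
    have h14 : 0 < a₁ + a₄ := by linarith
    have h23 : 0 < a₂ + a₃ := by linarith
    have h12 : 0 < a₁ + a₂ := by linarith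
    rcases hk with rfl | rfl | rfl <;> rcases hl with rfl | rfl | rfl <;>
      simp_all [Ccross] <;>
      (rw [neg_div, neg_lt_zero]; positivity)
  · rw [hIcc]
    simp only [Ccross]
    norm_num
    field_simp
    ring
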